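/- arXiv:2101.07690 — 5 statements merged into one kernel-verified Lean document; each statement's English description precedes it below -/
import Mathlib

section
/- Let G be a finite connected simple graph on n vertices with n ≥ 4. Then there exist vertex subsets S and T of V(G) such that |S| = n − 2, |T| = 3, S ∪ T = V(G), |S ∩ T| = 1, and the subgraphs of G induced on S and on T are both connected. -/
open SimpleGraph

lemma parent_exists {V : Type} (G : SimpleGraph V) (hG : G.Connected) (r w : V)
    (hw : w ≠ r) : ∃ y, G.Adj w y ∧ G.dist r y + 1 = G.dist r w := by
  have h0 : G.dist w r ≠ 0 := by
    rw [SimpleGraph.dist_ne_zero_iff_ne_and_reachable]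
    exact ⟨hw, hG.preconnected w r⟩
  obtain ⟨p, hp⟩ := (hG.preconnected w r).exists_walk_length_eq_dist
  cases p with
  | nil => exact absurd rfl hw
  | cons h q =>
    rename_i y
    refine ⟨y, h, ?_⟩
    have h1 : G.dist r y ≤ q.length := by rw [SimpleGraph.dist_comm]; exact SimpleGraph.dist_le q
    have h2 : q.length + 1 = G.dist w r := by simpa using hp
    have h3 : G.dist r w ≤ G.dist r y + 1 := by
      have := hG.dist_triangle (u := r) (v := y) (w := w)
      have hd1 : G.dist y w = 1 := by rw [SimpleGraph.dist_comm, SimpleGraph.dist_eq_one_iff_adj]; exact h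
      omega
    rw [show G.dist w r = G.dist r w from SimpleGraph.dist_comm] at h2
    omega

lemma induce_conn_of_parent {V : Type} (G : SimpleGraph V) (r : V) (P : V → V)
    (hP : ∀ w, w ≠ r → G.Adj w (P w) ∧ G.dist r (P w) + 1 = G.dist r w)
    (s : Set V) (hr : r ∈ s) (hcl : ∀ w ∈ s, w ≠ r → P w ∈ s) :
    (G.induce s).Connected := by
  have key : ∀ k, ∀ w, ∀ hw : w ∈ s, G.dist r w = k →
      (G.induce s).Reachable ⟨w, hw⟩ ⟨r, hr⟩ := by
    intro k
    induction k using Nat.strong_induction_on with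
    | _ k ih =>
      intro w hw hk
      by_cases hwr : w = r
      · subst hwr; rfl
      · obtain ⟨hadj, hdist⟩ := hP w hwr
        have hps : P w ∈ s := hcl w hw hwr
        have hrec : (G.induce s).Reachable ⟨P w, hps⟩ ⟨r, hr⟩ :=
          ih (G.dist r (P w)) (by omega) (P w) hps rfl
        have hadj2 : (G.induce s).Adj ⟨w, hw⟩ ⟨P w, hps⟩ := hadj
        exact hadj2.reachable.trans hrec
  rw [SimpleGraph.connected_iff]
  refine ⟨fun a b => ?_, ⟨⟨r, hr⟩⟩⟩
  obtain ⟨a, ha⟩ := a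
  obtain ⟨b, hb⟩ := b
  exact (key _ a ha rfl).trans (key _ b hb rfl).symm

lemma induce_triple_conn {V : Type} (G : SimpleGraph V) {a b c : V}
    (h1 : G.Adj a c) (h2 : G.Adj b c) :
    (G.induce ({a, b, c} : Set V)).Connected := by
  have hc : c ∈ ({a, b, c} : Set V) := by simp
  have key : ∀ x : ({a, b, c} : Set V),
      (G.induce ({a, b, c} : Set V)).Reachable x ⟨c, hc⟩ := by
    rintro ⟨x, hx⟩
    simp only [Set.mem_insert_iff, Set.mem_singleton_iff] at hx
    rcases hx with h | h | h
    · subst h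
      exact SimpleGraph.Adj.reachable (by exact h1)
    · subst h
      exact SimpleGraph.Adj.reachable (by exact h2)
    · subst h; rfl
  rw [SimpleGraph.connected_iff]
  exact ⟨fun x y => (key x).trans (key y).symm, ⟨⟨c, hc⟩⟩⟩

/-- Every finite connected simple graph on `n ≥ 4` vertices can be
dissected into a connected induced subgraph on `n - 2` vertices and a connected
induced subgraph on `3` vertices, sharing exactly one vertex and covering all
vertices. -/
theorem two_vertex_exploration_complete
    {V : Type} [Fintype V] [DecidableEq V] (G : SimpleGraph V)
    (hG : G.Connected) (n : ℕ) (hn : Fintype.card V = n) (h4 : 4 ≤ n) :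
    ∃ S T : Finset V,
      S.card = n - 2 ∧
      T.card = 3 ∧
      S ∪ T = Finset.univ ∧
      (S ∩ T).card = 1 ∧
      (G.induce (S : Set V)).Connected ∧
      (G.induce (T : Set V)).Connected := by
  classical
  obtain ⟨r⟩ := hG.nonempty
  have hex : ∀ w, ∃ y, w ≠ r → G.Adj w y ∧ G.dist r y + 1 = G.dist r w := by
    intro w
    by_cases hw : w = r
    · exact ⟨r, fun h => absurd hw h⟩
    · obtain ⟨y, h⟩ := parent_exists G hG r w hw
      exact ⟨y, fun _ => h⟩
  choose P hP using hex
  obtain ⟨u, -, hmax⟩ := Finset.exists_max_image Finset.univ (G.dist r)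
    ⟨r, Finset.mem_univ r⟩
  have hmax' : ∀ w, G.dist r w ≤ G.dist r u := fun w => hmax w (Finset.mem_univ w)
  have h2v : ∃ w, w ≠ u ∧ w ≠ r := by
    by_contra hcon
    push_neg at hcon
    have hsub : (Finset.univ : Finset V) ⊆ {u, r} := by
      intro w _
      simp only [Finset.mem_insert, Finset.mem_singleton]
      by_cases h : w = u
      · exact Or.inl h
      · exact Or.inr (hcon w h)
    have h1 := Finset.card_le_card hsub
    have h2 : ({u, r} : Finset V).card ≤ 2 :=
      (Finset.card_insert_le u {r}).trans (by simp)
    rw [Finset.card_univ, hn] at h1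
    omega
  obtain ⟨w0, hw0u, hw0r⟩ := h2v
  have hD : 0 < G.dist r u := by
    have h1 : 0 < G.dist r w0 := hG.pos_dist_of_ne (Ne.symm hw0r)
    have := hmax' w0
    omega
  have hur : u ≠ r := by
    intro h; rw [h, SimpleGraph.dist_self] at hD; omega
  have hru : r ≠ u := Ne.symm hur
  obtain ⟨hu1, hu2⟩ := hP u hur
  by_cases hA : ∃ w, w ≠ u ∧ w ≠ r ∧ P w = P u
  · -- Case A: p has another child u'
    obtain ⟨u', hne, hu'r, hPu'⟩ := hA
    obtain ⟨hu'1, hu'2⟩ := hP u' hu'r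
    rw [hPu'] at hu'1 hu'2
    have hdu' : G.dist r u' = G.dist r u := by omega
    have hpu : P u ≠ u := by intro h; rw [h] at hu2; omega
    have hpu' : P u ≠ u' := by intro h; rw [h] at hu2; omega
    have hru' : r ≠ u' := by
      intro h; rw [← h, SimpleGraph.dist_self] at hdu'; omega
    refine ⟨Finset.univ \ {u, u'}, {u, u', P u}, ?_, ?_, ?_, ?_, ?_, ?_⟩
    · rw [Finset.card_sdiff_of_subset (Finset.subset_univ _), Finset.card_univ, hn,
        Finset.card_insert_of_notMem (by simp [Ne.symm hne]),
        Finset.card_singleton]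
    · rw [Finset.card_insert_of_notMem (by
        simp only [Finset.mem_insert, Finset.mem_singleton]
        push_neg
        exact ⟨Ne.symm hne, fun h => hpu h.symm⟩),
        Finset.card_insert_of_notMem (by
          simp only [Finset.mem_singleton]
          exact fun h => hpu' h.symm),
        Finset.card_singleton]
    · ext w; simp; tauto
    · rw [show (Finset.univ \ {u, u'}) ∩ {u, u', P u} = {P u} by
        ext w
        simp only [Finset.mem_inter, Finset.mem_sdiff, Finset.mem_univ,
          Finset.mem_insert, Finset.mem_singleton, true_and]
        push_neg
        constructor
        · rintro ⟨⟨h1, h2⟩, h3 | h3 | h3⟩ <;> tauto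
        · rintro rfl
          exact ⟨⟨hpu, hpu'⟩, Or.inr (Or.inr rfl)⟩]
      exact Finset.card_singleton _
    · apply induce_conn_of_parent G r P (fun w hw => hP w hw)
      · simp only [Finset.coe_sdiff, Finset.coe_univ, Finset.coe_insert,
          Finset.coe_singleton, Set.mem_diff, Set.mem_univ, Set.mem_insert_iff,
          Set.mem_singleton_iff, true_and]
        push_neg
        exact ⟨hru, hru'⟩
      · intro w hw hwr
        obtain ⟨hw1, hw2⟩ := hP w hwr
        have hle := hmax' w
        simp only [Finset.coe_sdiff, Finset.coe_univ, Finset.coe_insert,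
          Finset.coe_singleton, Set.mem_diff, Set.mem_univ, Set.mem_insert_iff,
          Set.mem_singleton_iff, true_and] at hw ⊢
        push_neg
        constructor
        · intro h; rw [h] at hw2; omega
        · intro h; rw [h, hdu'] at hw2; omega
    · rw [show (({u, u', P u} : Finset V) : Set V) = ({u, u', P u} : Set V) by simp]
      exact induce_triple_conn G hu1 hu'1
  · -- Case B: u is the only child of p
    push_neg at hA
    have hpr : P u ≠ r := by
      intro h
      rw [h, SimpleGraph.dist_self] at hu2
      obtain ⟨hw1, hw2⟩ := hP w0 hw0r
      have hwd : 0 < G.dist r w0 := hG.pos_dist_of_ne (Ne.symm hw0r)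
      have hle := hmax' w0
      have h0 : G.dist r (P w0) = 0 := by omega
      have h1 : P w0 = r := (hG.dist_eq_zero_iff.mp h0).symm
      exact hA w0 hw0u hw0r (by rw [h1, h])
    obtain ⟨hg1, hg2⟩ := hP (P u) hpr
    have hpu : P u ≠ u := by intro h; rw [h] at hu2; omega
    have hgu : P (P u) ≠ u := by intro h; rw [h] at hg2; omega
    have hgp : P (P u) ≠ P u := by intro h; rw [h] at hg2; omega
    have hrp : r ≠ P u := Ne.symm hpr
    refine ⟨Finset.univ \ {u, P u}, {u, P (P u), P u}, ?_, ?_, ?_, ?_, ?_, ?_⟩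
    · rw [Finset.card_sdiff_of_subset (Finset.subset_univ _), Finset.card_univ, hn,
        Finset.card_insert_of_notMem (by simp [hpu.symm]),
        Finset.card_singleton]
    · rw [Finset.card_insert_of_notMem (by
        simp only [Finset.mem_insert, Finset.mem_singleton]
        push_neg
        exact ⟨fun h => hgu h.symm, fun h => hpu h.symm⟩),
        Finset.card_insert_of_notMem (by
          simp only [Finset.mem_singleton]
          exact hgp),
        Finset.card_singleton]
    · ext w; simp; tauto
    · rw [show (Finset.univ \ {u, P u}) ∩ {u, P (P u), P u} = {P (P u)} by
        ext w
        simp only [Finset.mem_inter, Finset.mem_sdiff, Finset.mem_univ,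
          Finset.mem_insert, Finset.mem_singleton, true_and]
        push_neg
        constructor
        · rintro ⟨⟨h1, h2⟩, h3 | h3 | h3⟩ <;> tauto
        · rintro rfl
          exact ⟨⟨hgu, hgp⟩, Or.inr (Or.inl rfl)⟩]
      exact Finset.card_singleton _
    · apply induce_conn_of_parent G r P (fun w hw => hP w hw)
      · simp only [Finset.coe_sdiff, Finset.coe_univ, Finset.coe_insert,
          Finset.coe_singleton, Set.mem_diff, Set.mem_univ, Set.mem_insert_iff,
          Set.mem_singleton_iff, true_and]
        push_neg
        exact ⟨hru, hrp⟩
      · intro w hw hwr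
        obtain ⟨hw1, hw2⟩ := hP w hwr
        have hle := hmax' w
        simp only [Finset.coe_sdiff, Finset.coe_univ, Finset.coe_insert,
          Finset.coe_singleton, Set.mem_diff, Set.mem_univ, Set.mem_insert_iff,
          Set.mem_singleton_iff, true_and] at hw ⊢
        push_neg at hw ⊢
        refine ⟨?_, hA w hw.1 hwr⟩
        intro h; rw [h] at hw2; omega
    · rw [show (({u, P (P u), P u} : Finset V) : Set V)
          = ({u, P (P u), P u} : Set V) by simp]
      exact induce_triple_conn G hu1 hg1.symm
end

section
/- Let G be a finite connected simple graph whose vertex set is V = S ∪ T, where |T| = 3, |S ∩ T| = 1, and the subgraphs of G induced on S and on T are both connected. Let G' be a simple graph on vertex set V ∪ {x} with x ∉ V, whose induced subgraph on V equals G, such that x has at least one neighbor in G' and every neighbor of x in G' lies in T. Then there exist subsets S', T' of V ∪ {x} with |S'| = |S| + 1, |T'| = 3, S' ∪ T' = V ∪ {x}, |S' ∩ T'| = 1, and the subgraphs of G' induced on S' and on T' are both connected. -/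
/-!
Write the dissection as `S = {a, b}ᶜ`, `T = {c, a, b}` with shared vertex `c`, and let `x` be the
new vertex. If `x ∼ c`, keep `T` and add `x` to `S`. Otherwise `x ∼ a`, say. If `c ∼ b`, take
`T' = {x, a, r}` for any neighbour `r` of `a` in `T`; then `S' = S ∪ {b}` is connected through the
edge `bc`. If `c ≁ b`, connectivity of `T` forces `c ∼ a ∼ b`, and we take the wedge
`T' = {a, x, b}` together with `S' = S ∪ {a}`, which share `a`.
-/

open SimpleGraph Finset

lemma Set.compl_image_some {α : Type*} (s : Set α) :
    (some '' s)ᶜ = insert none (some '' sᶜ) := by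
  ext (_ | v) <;> simp

lemma Set.compl_insert_none_image_some {α : Type*} (s : Set α) :
    (insert none (some '' s))ᶜ = some '' sᶜ := by
  ext (_ | v) <;> simp

lemma Set.compl_singleton_eq_insert_compl_pair {α : Type*} {a b : α} (hab : a ≠ b) :
    ({a}ᶜ : Set α) = insert b {a, b}ᶜ := by
  ext v
  simp only [Set.mem_compl_iff, Set.mem_insert_iff, Set.mem_singleton_iff]
  grind

lemma Finset.card_add_two_of_union_eq_univ {α : Type*} [Fintype α] [DecidableEq α]
    {S T : Finset α} (hU : S ∪ T = univ) (hT : #T = 3) (hI : #(S ∩ T) = 1) :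
    #S + 2 = Fintype.card α := by
  have := card_union_add_card_inter S T
  rw [hU, hT, hI, card_univ] at this
  omega

lemma Finset.exists_eq_compl_pair_of_union_eq_univ {α : Type*} [Fintype α] [DecidableEq α]
    {S T : Finset α} (hU : S ∪ T = univ) (hT : #T = 3) (hI : #(S ∩ T) = 1) :
    ∃ a b c, a ≠ b ∧ c ≠ a ∧ c ≠ b ∧ S = {a, b}ᶜ ∧ T = {c, a, b} := by
  obtain ⟨c, hc⟩ := card_eq_one.mp hI
  have hcT : c ∈ T := (mem_inter.mp (hc ▸ mem_singleton_self c)).2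
  have hcard : #(T.erase c) = 2 := by rw [card_erase_of_mem hcT, hT]
  obtain ⟨a, b, hab, he⟩ := card_eq_two.mp hcard
  have ha : a ∈ T.erase c := by simp [he]
  have hb : b ∈ T.erase c := by simp [he]
  refine ⟨a, b, c, hab, (ne_of_mem_erase ha).symm, (ne_of_mem_erase hb).symm, ?_, ?_⟩
  · rw [← he]
    ext v
    have hUv := hU ▸ mem_univ v
    have hIv := Finset.ext_iff.mp hc v
    simp only [mem_union, mem_inter, mem_singleton] at hUv hIv
    simp only [mem_compl, mem_erase]
    grind
  · rw [← he, insert_erase hcT]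

namespace SimpleGraph

variable {α β : Type*} {H : SimpleGraph α}

lemma Connected.induce_image {K : SimpleGraph β} (φ : H →g K) {s : Set α}
    (hs : (H.induce s).Connected) : (K.induce (φ '' s)).Connected :=
  hs.map (induceHom φ (Set.mapsTo_image φ s)) <| by
    rintro ⟨_, v, hv, rfl⟩
    exact ⟨⟨v, hv⟩, rfl⟩

lemma Connected.induce_image_some {G : SimpleGraph (Option α)}
    (hadj : ∀ ⦃u v⦄, H.Adj u v → G.Adj (some u) (some v)) {s : Set α}
    (hs : (H.induce s).Connected) : (G.induce (some '' s)).Connected :=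
  hs.induce_image ⟨some, @hadj⟩

lemma Connected.induce_insert {s : Set α} {a b : α} (hs : (H.induce s).Connected) (hb : b ∈ s)
    (hab : H.Adj a b) : (H.induce (insert a s)).Connected := by
  have := induce_union_connected (induce_pair_connected_of_adj hab).preconnected hs.preconnected
    ⟨b, by simp, hb⟩
  rwa [Set.insert_union, Set.singleton_union, Set.insert_eq_of_mem hb] at this

lemma induce_triple_connected_of_adj {a b c : α} (hab : H.Adj a b) (hac : H.Adj a c) :
    (H.induce {a, b, c}).Connected := by
  rw [Set.insert_comm]
  exact (induce_pair_connected_of_adj hac).induce_insert (by simp) hab.symm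

lemma Connected.exists_adj_mem_of_induce {s : Set α} (hs : (H.induce s).Connected) {p q : α}
    (hp : p ∈ s) (hq : q ∈ s) (hpq : p ≠ q) : ∃ r ∈ s, H.Adj p r := by
  have : Nontrivial s := ⟨⟨p, hp⟩, ⟨q, hq⟩, by simpa⟩
  obtain ⟨⟨r, hr⟩, hpr⟩ := hs.preconnected.exists_adj_of_nontrivial ⟨p, hp⟩
  exact ⟨r, hr, hpr⟩

/-- The dissection of the vertex set into the connected parts `{a, b}ᶜ` and `{c, a, b}`, which
share exactly the vertex `c`; every dissection with a part of size `3` has this form. -/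
structure IsDissection (H : SimpleGraph α) (a b c : α) : Prop where
  ne : a ≠ b
  ne_left : c ≠ a
  ne_right : c ≠ b
  connected_compl : (H.induce ({a, b}ᶜ : Set α)).Connected
  connected_triple : (H.induce ({c, a, b} : Set α)).Connected

variable {a b c : α}

lemma IsDissection.swap (h : H.IsDissection a b c) : H.IsDissection b a c where
  ne := h.ne.symm
  ne_left := h.ne_right
  ne_right := h.ne_left
  connected_compl := by rw [Set.pair_comm]; exact h.connected_compl
  connected_triple := by rw [Set.pair_comm b a]; exact h.connected_triple

lemma exists_isDissection [Fintype α] [DecidableEq α] {S T : Finset α} (hU : S ∪ T = univ)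
    (hT : #T = 3) (hI : #(S ∩ T) = 1) (hS : (H.induce ↑S).Connected)
    (hTc : (H.induce ↑T).Connected) :
    ∃ a b c, S = {a, b}ᶜ ∧ T = {c, a, b} ∧ H.IsDissection a b c := by
  obtain ⟨a, b, c, hab, hca, hcb, rfl, rfl⟩ := exists_eq_compl_pair_of_union_eq_univ hU hT hI
  exact ⟨a, b, c, rfl, rfl, hab, hca, hcb, by rwa [coe_compl, coe_pair] at hS,
    by rwa [coe_insert, coe_pair] at hTc⟩

lemma IsDissection.exists_finsets [Fintype α] [DecidableEq α] (h : H.IsDissection a b c) :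
    ∃ S T : Finset α, #T = 3 ∧ S ∪ T = univ ∧ #(S ∩ T) = 1 ∧
      (H.induce ↑S).Connected ∧ (H.induce ↑T).Connected := by
  have hc : c ∉ ({a, b} : Finset α) := by simp [h.ne_left, h.ne_right]
  refine ⟨{a, b}ᶜ, {c, a, b}, ?_, ?_, ?_, ?_, ?_⟩
  · rw [card_insert_of_notMem hc, card_pair h.ne]
  · ext
    simp only [mem_union, mem_compl, mem_insert, mem_singleton, mem_univ, iff_true]
    tauto
  · rw [card_eq_one]
    refine ⟨c, ?_⟩
    ext v
    simp only [mem_inter, mem_compl, mem_insert, mem_singleton]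
    grind [h.ne_left, h.ne_right]
  · rw [coe_compl, coe_pair]
    exact h.connected_compl
  · rw [coe_insert, coe_pair]
    exact h.connected_triple

variable {G' : SimpleGraph (Option α)}

lemma IsDissection.extend_of_adj_shared (h : H.IsDissection a b c)
    (hadj : ∀ ⦃u v⦄, H.Adj u v → G'.Adj (some u) (some v)) (hxc : G'.Adj none (some c)) :
    G'.IsDissection (some a) (some b) (some c) where
  ne := by simpa using h.ne
  ne_left := by simpa using h.ne_left
  ne_right := by simpa using h.ne_right
  connected_compl := by
    rw [← Set.image_pair, Set.compl_image_some]
    refine (h.connected_compl.induce_image_some hadj).induce_insert ⟨c, ?_, rfl⟩ hxc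
    simp [h.ne_left, h.ne_right]
  connected_triple := by
    rw [← Set.image_pair, ← Set.image_insert_eq]
    exact h.connected_triple.induce_image_some hadj

lemma IsDissection.exists_extend_of_adj_left (h : H.IsDissection a b c)
    (hadj : ∀ ⦃u v⦄, H.Adj u v → G'.Adj (some u) (some v)) (hxa : G'.Adj none (some a)) :
    ∃ a' b' c', G'.IsDissection a' b' c' := by
  have hc : c ∈ ({a, b}ᶜ : Set α) := by simp [h.ne_left, h.ne_right]
  have hcompl : ∀ v, ({none, some v}ᶜ : Set (Option α)) = some '' {v}ᶜ := fun v => by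
    rw [← Set.image_singleton, Set.compl_insert_none_image_some]
  by_cases hcb : H.Adj c b
  · obtain ⟨r, -, har⟩ := h.connected_triple.exists_adj_mem_of_induce (p := a) (q := c)
      (by simp) (by simp) h.ne_left.symm
    refine ⟨none, some a, some r, by simp, by simp, by simpa using har.ne.symm, ?_, ?_⟩
    · rw [hcompl, Set.compl_singleton_eq_insert_compl_pair h.ne]
      exact (h.connected_compl.induce_insert hc hcb.symm).induce_image_some hadj
    · exact (induce_pair_connected_of_adj hxa).induce_insert (by simp) (hadj har.symm)
  · obtain ⟨r, hr, hcr⟩ := h.connected_triple.exists_adj_mem_of_induce (p := c) (q := a)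
      (by simp) (by simp) h.ne_left
    obtain ⟨r', hr', hbr'⟩ := h.connected_triple.exists_adj_mem_of_induce (p := b) (q := a)
      (by simp) (by simp) h.ne.symm
    have hca : H.Adj c a := by
      obtain rfl | rfl | rfl := hr
      exacts [absurd hcr H.irrefl, hcr, absurd hcr hcb]
    have hba : H.Adj b a := by
      obtain rfl | rfl | rfl := hr'
      exacts [absurd hbr'.symm hcb, hbr', absurd hbr' H.irrefl]
    refine ⟨none, some b, some a, by simp, by simp, by simpa using h.ne, ?_, ?_⟩
    · rw [hcompl, Set.compl_singleton_eq_insert_compl_pair h.ne.symm, Set.pair_comm]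
      exact (h.connected_compl.induce_insert hc hca.symm).induce_image_some hadj
    · exact induce_triple_connected_of_adj hxa.symm (hadj hba.symm)

end SimpleGraph

theorem two_vertex_exploration_inductive_step_general
    {V : Type} [Fintype V] [DecidableEq V]
    (G : SimpleGraph V) (G' : SimpleGraph (Option V))
    (S T : Finset V)
    (hunion : S ∪ T = Finset.univ)
    (hT : T.card = 3)
    (hST : (S ∩ T).card = 1)
    (hSconn : (G.induce (S : Set V)).Connected)
    (hTconn : (G.induce (T : Set V)).Connected)
    (hinduce : ∀ u v : V, G'.Adj (some u) (some v) ↔ G.Adj u v)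
    (hx_nbr : ∃ y, G'.Adj none y)
    (hx_in_T : ∀ u : V, G'.Adj none (some u) → u ∈ T) :
    ∃ S' T' : Finset (Option V),
      S'.card = S.card + 1 ∧
      T'.card = 3 ∧
      S' ∪ T' = Finset.univ ∧
      (S' ∩ T').card = 1 ∧
      (G'.induce (S' : Set (Option V))).Connected ∧
      (G'.induce (T' : Set (Option V))).Connected := by
  have hScard := card_add_two_of_union_eq_univ hunion hT hST
  obtain ⟨a, b, c, -, rfl, hD⟩ := exists_isDissection hunion hT hST hSconn hTconn
  have hadj : ∀ ⦃u v⦄, G.Adj u v → G'.Adj (some u) (some v) := fun u v => (hinduce u v).mpr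
  obtain ⟨y, hxy⟩ := hx_nbr
  obtain ⟨a', b', c', hD'⟩ : ∃ a' b' c', G'.IsDissection a' b' c' := by
    obtain _ | u := y
    · exact absurd hxy G'.irrefl
    obtain rfl | rfl | rfl := by simpa using hx_in_T u hxy
    · exact ⟨_, _, _, hD.extend_of_adj_shared hadj hxy⟩
    · exact hD.exists_extend_of_adj_left hadj hxy
    · exact hD.swap.exists_extend_of_adj_left hadj hxy
  obtain ⟨S', T', hT', hU', hI', hS', hT'conn⟩ := hD'.exists_finsets
  refine ⟨S', T', ?_, hT', hU', hI', hS', hT'conn⟩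
  have hS'card := card_add_two_of_union_eq_univ hU' hT' hI'
  rw [Fintype.card_option] at hS'card
  omega

/-- Inductive step of the completeness theorem for two-vertex
exploration.  `G` is a connected graph on vertex set `V = S ∪ T` with `|T| = 3`,
`|S ∩ T| = 1`, and both induced parts connected.  `G'` extends `G` by one new
vertex (modeled as `none : Option V`) that has at least one neighbor and all of
whose neighbors lie in `T`.  Then the enlarged graph can be re-dissected into a
connected part `S'` of size `|S| + 1` and a connected size-3 part `T'` sharing
exactly one vertex and covering all vertices. -/
theorem two_vertex_exploration_inductive_step
    {V : Type} [Fintype V] [DecidableEq V]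
    (G : SimpleGraph V) (G' : SimpleGraph (Option V))
    (hG : G.Connected)
    (S T : Finset V)
    (hunion : S ∪ T = Finset.univ)
    (hT : T.card = 3)
    (hST : (S ∩ T).card = 1)
    (hSconn : (G.induce (S : Set V)).Connected)
    (hTconn : (G.induce (T : Set V)).Connected)
    (hinduce : ∀ u v : V, G'.Adj (some u) (some v) ↔ G.Adj u v)
    (hx_nbr : ∃ y, G'.Adj none y)
    (hx_in_T : ∀ u : V, G'.Adj none (some u) → u ∈ T) :
    ∃ S' T' : Finset (Option V),
      S'.card = S.card + 1 ∧
      T'.card = 3 ∧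
      S' ∪ T' = Finset.univ ∧
      (S' ∩ T').card = 1 ∧
      (G'.induce (S' : Set (Option V))).Connected ∧
      (G'.induce (T' : Set (Option V))).Connected :=
  two_vertex_exploration_inductive_step_general G G' S T hunion hT hST hSconn hTconn hinduce hx_nbr
    hx_in_T
end

section
/- Let G be the tree on the 7 vertices {c, a₁, a₂, a₃, b₁, b₂, b₃} whose edge set is {c a₁, c a₂, c a₃, a₁ b₁, a₂ b₂, a₃ b₃} (a three-pronged star with two vertices in each prong). Then there do not exist vertex subsets S and T with |S| = 4, |T| = 4, S ∪ T = V(G), |S ∩ T| = 1, and both induced subgraphs G[S] and G[T] connected. -/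
/-- The three-pronged star with two vertices in each prong: center `0`,
middle vertices `1, 2, 3`, leaves `4, 5, 6`, with edges
`{0-1, 0-2, 0-3, 1-4, 2-5, 3-6}`. -/
def prongedStar : SimpleGraph (Fin 7) :=
  SimpleGraph.fromRel (fun u v =>
    (u, v) ∈ ([(0, 1), (0, 2), (0, 3), (1, 4), (2, 5), (3, 6)] : List (Fin 7 × Fin 7)))

instance : DecidableRel prongedStar.Adj := fun u v => by
  unfold prongedStar SimpleGraph.fromRel
  exact instDecidableAnd

set_option maxRecDepth 100000 in
set_option maxHeartbeats 4000000 in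
/-- The 7-vertex three-pronged star cannot be dissected into two
connected induced subgraphs of 4 vertices each sharing exactly one vertex and
covering all vertices. -/
theorem prongedStar_no_two_four_dissection :
    ¬ ∃ S T : Finset (Fin 7),
        S.card = 4 ∧
        T.card = 4 ∧
        S ∪ T = Finset.univ ∧
        (S ∩ T).card = 1 ∧
        (prongedStar.induce (S : Set (Fin 7))).Connected ∧
        (prongedStar.induce (T : Set (Fin 7))).Connected := by
  simp only [SimpleGraph.connected_iff, Set.nonempty_coe_sort, Finset.coe_nonempty]
  decide
end

section
/- Let k ≥ 1 and let G be a finite connected simple graph on exactly 2k + 1 vertices. Then there exist vertex subsets T₁, …, T_k of V(G), each of cardinality 3 and each inducing a connected subgraph of G, such that T₁ ∪ ⋯ ∪ T_k = V(G), and for every i with 2 ≤ i ≤ k: |T_i ∩ (T₁ ∪ ⋯ ∪ T_{i−1})| = 1 and the subgraph of G induced on T₁ ∪ ⋯ ∪ T_i is connected. -/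
open SimpleGraph

variable {W : Type} (H : SimpleGraph W)

/-- A triple `{a,b,c}` with edges `a-b` and `b-c` induces a connected subgraph. -/
lemma aux_triple_connected {a b c : W} (hab : H.Adj a b) (hbc : H.Adj b c) :
    (H.induce {a, b, c}).Connected := by
  rw [connected_iff]
  refine ⟨?_, ⟨⟨b, by simp⟩⟩⟩
  have hb : b ∈ ({a, b, c} : Set W) := by simp
  have key : ∀ v (hv : v ∈ ({a, b, c} : Set W)),
      (H.induce {a, b, c}).Reachable ⟨v, hv⟩ ⟨b, hb⟩ := by
    intro v hv
    rcases hv with h | h | h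
    · subst h
      exact (SimpleGraph.Adj.reachable (by simpa using hab))
    · subst h; rfl
    · subst h
      exact (SimpleGraph.Adj.reachable (by simpa using hbc.symm))
  intro x y
  exact (key x x.2).trans (key y y.2).symm

/-- Parent: a vertex at distance `n+1` from `r` has a neighbor at distance `n`. -/
lemma aux_parent (hH : H.Connected) {r v : W} {n : ℕ} (h : H.dist v r = n + 1) :
    ∃ p, H.Adj v p ∧ H.dist p r = n := by
  obtain ⟨q, hq⟩ := hH.exists_walk_length_eq_dist v r
  have hnil : ¬ q.Nil := by
    rw [SimpleGraph.Walk.not_nil_iff_lt_length]; omega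
  refine ⟨q.getVert 1, SimpleGraph.Walk.adj_snd hnil, ?_⟩
  have h1 : H.dist (q.getVert 1) r ≤ n := by
    have := SimpleGraph.dist_le q.tail
    have hlen := q.length_tail_add_one hnil
    show H.dist q.snd r ≤ n
    omega
  have h2 : H.dist v r ≤ H.dist v (q.getVert 1) + H.dist (q.getVert 1) r :=
    hH.dist_triangle
  have h3 : H.dist v (q.getVert 1) = 1 :=
    (SimpleGraph.dist_eq_one_iff_adj).2 (SimpleGraph.Walk.adj_snd hnil)
  omega

/-- Peel off two vertices from a connected graph on ≥ 3 vertices. -/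
lemma aux_peel [Fintype W] (hH : H.Connected) (h3 : 3 ≤ Fintype.card W) :
    ∃ u w x : W, u ≠ w ∧ x ≠ u ∧ x ≠ w ∧
      (H.induce {v | v ≠ u ∧ v ≠ w}).Connected ∧
      (H.induce {x, u, w}).Connected := by
  classical
  have hne : Nonempty W := Fintype.card_pos_iff.1 (by omega)
  obtain ⟨r⟩ := hne
  set d : W → ℕ := fun v => H.dist v r with hd
  have hdr : d r = 0 := SimpleGraph.dist_self
  have hdzero : ∀ v, d v = 0 → v = r := by
    intro v hv
    exact (hH.dist_eq_zero_iff).1 hv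
  have hpar : ∀ v : W, 0 < d v → ∃ p, H.Adj v p ∧ d p + 1 = d v := by
    intro v hv
    obtain ⟨n, hn⟩ : ∃ n, d v = n + 1 := ⟨d v - 1, by omega⟩
    obtain ⟨p, hp1, hp2⟩ := aux_parent H hH (show H.dist v r = n + 1 from hn)
    refine ⟨p, hp1, ?_⟩
    simp only [hd] at hn ⊢
    omega
  choose par hadj hdpar using hpar
  -- key connectivity lemma
  have key : ∀ S : Set W, r ∈ S → (∀ v (hv : v ∈ S) (h : 0 < d v), par v h ∈ S) →
      (H.induce S).Connected := by
    intro S hrS hcl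
    rw [connected_iff]
    refine ⟨?_, ⟨⟨r, hrS⟩⟩⟩
    have main : ∀ n (v : W) (hv : v ∈ S), d v ≤ n →
        (H.induce S).Reachable ⟨v, hv⟩ ⟨r, hrS⟩ := by
      intro n
      induction n with
      | zero =>
        intro v hv hdv
        have : v = r := hdzero v (by omega)
        subst this; rfl
      | succ n ih =>
        intro v hv hdv
        by_cases h0 : 0 < d v
        · have hp : par v h0 ∈ S := hcl v hv h0
          have hadj' : (H.induce S).Adj ⟨v, hv⟩ ⟨par v h0, hp⟩ := by
            simpa using hadj v h0
          have := hdpar v h0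
          exact hadj'.reachable.trans (ih _ hp (by omega))
        · have : v = r := hdzero v (by omega)
          subst this; rfl
    intro x y
    exact (main (d x) x x.2 le_rfl).trans (main (d y) y y.2 le_rfl).symm
  -- internal vertices
  set I : Finset W := Finset.univ.filter (fun p => ∃ v h, par v h = p) with hI
  have hInonempty : I.Nonempty := by
    -- there is a vertex ≠ r, its parent is internal
    obtain ⟨v, hvne⟩ : ∃ v : W, v ≠ r := by
      by_contra hcon
      push_neg at hcon
      have : Fintype.card W ≤ 1 := Fintype.card_le_one_iff.2 (by
        intro a b; rw [hcon a, hcon b])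
      omega
    have h0 : 0 < d v := hH.pos_dist_of_ne hvne
    exact ⟨par v h0, by simp [hI]; exact ⟨v, h0, rfl⟩⟩
  obtain ⟨p, hpI, hpmax⟩ := I.exists_max_image d hInonempty
  simp only [hI, Finset.mem_filter, Finset.mem_univ, true_and] at hpI
  obtain ⟨c₀, hc₀0, hc₀p⟩ := hpI
  -- children of p are leaves
  have hleaf : ∀ c (hc : 0 < d c), par c hc = p → ∀ v h, par v h ≠ c := by
    intro c hc hcp v h hvc
    have hcI : c ∈ I := by simp [hI]; exact ⟨v, h, hvc⟩
    have := hpmax c hcI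
    have h1 := hdpar c hc
    rw [hcp] at h1
    omega
  have hdc₀ : d c₀ = d p + 1 := by have := hdpar c₀ hc₀0; rw [hc₀p] at this; omega
  by_cases hcase : ∃ c', ∃ (hc' : 0 < d c'), c' ≠ c₀ ∧ par c' hc' = p
  · -- two children u = c₀, w = c', x = p
    obtain ⟨c', hc'0, hne', hc'p⟩ := hcase
    have hdc' : d c' = d p + 1 := by have := hdpar c' hc'0; rw [hc'p] at this; omega
    refine ⟨c₀, c', p, fun h => hne' h.symm, ?_, ?_, ?_, ?_⟩
    · intro h; rw [h] at hdc₀; omega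
    · intro h; rw [h] at hdc'; omega
    · refine key _ ⟨?_, ?_⟩ ?_
      · intro h; rw [← h, hdr] at hdc₀; omega
      · intro h; rw [← h, hdr] at hdc'; omega
      · intro v hv h
        constructor
        · exact hleaf c₀ hc₀0 hc₀p v h
        · exact hleaf c' hc'0 hc'p v h
    · -- {p, c₀, c'} connected
      have h1 : H.Adj c₀ p := by rw [← hc₀p]; exact hadj c₀ hc₀0
      have h2 : H.Adj p c' := by rw [← hc'p]; exact (hadj c' hc'0).symm
      have := aux_triple_connected H h1 h2
      have hset : ({p, c₀, c'} : Set W) = {c₀, p, c'} := by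
        ext y; simp; tauto
      rw [hset]
      exact this
  · -- c₀ is the only child of p
    push_neg at hcase
    have honly : ∀ c (hc : 0 < d c), par c hc = p → c = c₀ := by
      intro c hc hcp
      by_contra hne'
      exact (hcase c hc hne') hcp
    by_cases hpr : p = r
    · -- then W ⊆ {r, c₀}, contradiction with card ≥ 3
      exfalso
      have hall : ∀ v : W, v = r ∨ v = c₀ := by
        intro v
        by_cases h0 : 0 < d v
        · by_cases h1 : d v = 1
          · right
            have := hdpar v h0
            have : par v h0 = r := hdzero _ (by omega)
            exact honly v h0 (by rw [this, hpr])
          · -- d v ≥ 2: parent of v has positive depth, and par (par v) would make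
            -- some vertex at depth 1 have a child... show directly: take a vertex of depth
            -- d v - 1 (the parent); induction needed. Use strong induction:
            exfalso
            -- find vertex of depth exactly... use: par v h0 ∈ I, so d (par v h0) ≤ d p = 0
            have hpI' : par v h0 ∈ I := by simp [hI]; exact ⟨v, h0, rfl⟩
            have := hpmax _ hpI'
            have h2 := hdpar v h0
            have hdp0 : d p = 0 := by rw [hpr]; exact hdr
            -- d (par v) ≤ d p = 0, so par v = r, so d v = 1, contradiction
            have : par v h0 = r := hdzero _ (by omega)
            have := hdpar v h0
            rw [‹par v h0 = r›, hdr] at this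
            omega
        · left; exact hdzero v (by omega)
      have hsub : (Finset.univ : Finset W) ⊆ {r, c₀} := by
        intro v _
        rcases hall v with h | h <;> simp [h]
      have := Finset.card_le_card hsub
      have h2 : ({r, c₀} : Finset W).card ≤ 2 := Finset.card_insert_le _ _ |>.trans (by simp)
      rw [Finset.card_univ] at this
      omega
    · -- remove {c₀, p}, x = par p
      have hp0 : 0 < d p := hH.pos_dist_of_ne hpr
      set x := par p hp0 with hx
      have hdx : d x + 1 = d p := hdpar p hp0
      refine ⟨c₀, p, x, ?_, ?_, ?_, ?_, ?_⟩
      · intro h; rw [h] at hdc₀; omega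
      · intro h; rw [← h] at hdc₀; omega
      · intro h; rw [h] at hdx; omega
      · refine key _ ⟨?_, ?_⟩ ?_
        · intro h; rw [← h, hdr] at hdc₀; omega
        · intro h; rw [← h] at hp0; omega
        · intro v hv h
          constructor
          · exact hleaf c₀ hc₀0 hc₀p v h
          · intro hcon
            exact hv.1 (honly v h hcon)
      · -- {x, c₀, p} : edges x-p and p-c₀
        have h1 : H.Adj x p := (hadj p hp0).symm
        have h2 : H.Adj p c₀ := by rw [← hc₀p]; exact (hadj c₀ hc₀0).symm
        have := aux_triple_connected H h1 h2
        have hset : ({x, p, c₀} : Set W) = {x, c₀, p} := by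
          ext y; simp; tauto
        rw [hset] at this
        exact this

/-- Transfer connectivity of a doubly-induced subgraph. -/
lemma aux_induce_induce {S : Set W} (A : Set S)
    (h : ((H.induce S).induce A).Connected) :
    (H.induce (Subtype.val '' A)).Connected := by
  let f : ((H.induce S).induce A) →g (H.induce (Subtype.val '' A)) :=
    { toFun := fun a => ⟨a.1.1, ⟨a.1, a.2, rfl⟩⟩
      map_rel' := fun hab => by simpa using hab }
  have hf : Function.Surjective f := by
    rintro ⟨v, a, ha, rfl⟩
    exact ⟨⟨a, ha⟩, rfl⟩
  exact h.map f hf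

lemma aux_univ_connected [Fintype W] (hH : H.Connected) :
    (H.induce (Set.univ : Set W)).Connected :=
  hH.map (SimpleGraph.induceUnivIso H).symm.toHom
    (SimpleGraph.induceUnivIso H).symm.toEquiv.surjective

lemma aux_main : ∀ (k : ℕ), 1 ≤ k → ∀ (W : Type) [Fintype W] [DecidableEq W]
    (H : SimpleGraph W), H.Connected → Fintype.card W = 2 * k + 1 →
    ∃ T : Fin k → Finset W,
      (∀ i, (T i).card = 3) ∧
      (∀ i, (H.induce ((T i : Finset W) : Set W)).Connected) ∧
      Finset.univ.biUnion T = Finset.univ ∧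
      (∀ i : Fin k, 0 < i.val →
        (T i ∩ (Finset.Iio i).biUnion T).card = 1 ∧
        (H.induce (((Finset.Iic i).biUnion T : Finset W) : Set W)).Connected) := by
  intro k
  induction k with
  | zero => intro h; omega
  | succ k ih =>
    intro _ W _ _ H hH hcard
    by_cases hk0 : k = 0
    · -- base case : k + 1 = 1
      subst hk0
      refine ⟨fun _ => Finset.univ, ?_, ?_, ?_, ?_⟩
      · intro i; rw [Finset.card_univ, hcard]
      · intro i
        have he : ((Finset.univ : Finset W) : Set W) = Set.univ := by simp
        rw [he]; exact aux_univ_connected H hH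
      · ext a
        simp only [Finset.mem_biUnion, Finset.mem_univ, true_and, iff_true]
        exact ⟨0, trivial⟩
      · intro i hi; exact absurd i.isLt (by omega)
    · -- inductive step
      have hk1 : 1 ≤ k := by omega
      have h3' : 3 ≤ Fintype.card W := by omega
      obtain ⟨u, w, x, huw, hxu, hxw, hScon, htri⟩ := aux_peel H hH h3'
      classical
      set S : Set W := {v | v ≠ u ∧ v ≠ w} with hS
      haveI : Fintype ↥S := Fintype.ofFinite ↥S
      have hxS : x ∈ S := ⟨hxu, hxw⟩
      have huS : u ∉ S := by simp [hS]
      have hwS : w ∉ S := by simp [hS]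
      have hcardS : Fintype.card ↥S = 2 * k + 1 := by
        rw [← Set.toFinset_card]
        have he : S.toFinset = Finset.univ \ {u, w} := by
          ext a; simp [hS]
        rw [he, Finset.card_sdiff_of_subset (by simp), Finset.card_univ, hcard,
          Finset.card_pair huw]
        omega
      obtain ⟨T', h1, h2, hcov, h4⟩ := ih hk1 ↥S (H.induce S) hScon hcardS
      set F : Fin (k + 1) → Finset W :=
        fun i => if h : i.val < k then (T' ⟨i.val, h⟩).image Subtype.val
          else ({x, u, w} : Finset W) with hF
      have hFlt : ∀ (i : Fin (k + 1)) (h : i.val < k),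
          F i = (T' ⟨i.val, h⟩).image Subtype.val := by
        intro i h; rw [hF]; exact dif_pos h
      have hFlast : ∀ (i : Fin (k + 1)), ¬ i.val < k → F i = ({x, u, w} : Finset W) := by
        intro i h; rw [hF]; exact dif_neg h
      have hmem : ∀ (a : W) (j : Fin k),
          a ∈ (T' j).image Subtype.val ↔ ∃ (ha : a ∈ S), ⟨a, ha⟩ ∈ T' j := by
        intro a j
        simp only [Finset.mem_image]
        constructor
        · rintro ⟨b, hb, rfl⟩; exact ⟨b.2, hb⟩
        · rintro ⟨ha, h⟩; exact ⟨⟨a, ha⟩, h, rfl⟩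
      have hcover : ∀ (a : W) (ha : a ∈ S), ∃ j : Fin k, (⟨a, ha⟩ : ↥S) ∈ T' j := by
        intro a ha
        have hm : (⟨a, ha⟩ : ↥S) ∈ Finset.univ.biUnion T' := by
          rw [hcov]; exact Finset.mem_univ _
        simpa using hm
      have hbUnion : ∀ (J : Finset (Fin (k + 1))) (J' : Finset (Fin k)),
          (∀ j : Fin (k + 1), j ∈ J → ∃ (hj : j.val < k), (⟨j.val, hj⟩ : Fin k) ∈ J') →
          (∀ j' : Fin k, j' ∈ J' →
            (⟨j'.val, Nat.lt_succ_of_lt j'.isLt⟩ : Fin (k + 1)) ∈ J) →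
          J.biUnion F = (J'.biUnion T').image Subtype.val := by
        intro J J' hJJ' hJ'J
        ext a
        rw [Finset.mem_image]
        simp only [Finset.mem_biUnion]
        constructor
        · rintro ⟨j, hjJ, haj⟩
          obtain ⟨hj, hjJ'⟩ := hJJ' j hjJ
          rw [hFlt j hj, hmem] at haj
          obtain ⟨ha, hmem'⟩ := haj
          exact ⟨⟨a, ha⟩, ⟨⟨j.val, hj⟩, hjJ', hmem'⟩, rfl⟩
        · rintro ⟨b, hb, rfl⟩
          obtain ⟨j', hj'J', hbj'⟩ := hb
          refine ⟨⟨j'.val, Nat.lt_succ_of_lt j'.isLt⟩, hJ'J j' hj'J', ?_⟩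
          rw [hFlt _ j'.isLt, hmem]
          exact ⟨b.2, by simpa using hbj'⟩
      refine ⟨F, ?_, ?_, ?_, ?_⟩
      · -- cards
        intro i
        by_cases h : i.val < k
        · rw [hFlt i h, Finset.card_image_of_injective _ Subtype.val_injective]
          exact h1 _
        · rw [hFlast i h]
          rw [Finset.card_insert_of_notMem (by simp [hxu, hxw]),
            Finset.card_insert_of_notMem (by simp [huw]), Finset.card_singleton]
      · -- each triple connected
        intro i
        by_cases h : i.val < k
        · have he : ((F i : Finset W) : Set W)
              = Subtype.val '' ((T' ⟨i.val, h⟩ : Finset ↥S) : Set ↥S) := by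
            rw [hFlt i h]; exact Finset.coe_image
          rw [he]
          exact aux_induce_induce H _ (h2 _)
        · have he : ((F i : Finset W) : Set W) = ({x, u, w} : Set W) := by
            rw [hFlast i h]; simp
          rw [he]
          exact htri
      · -- cover
        ext a
        simp only [Finset.mem_biUnion, Finset.mem_univ, true_and, iff_true]
        by_cases ha : a ∈ S
        · obtain ⟨j, hj⟩ := hcover a ha
          refine ⟨⟨j.val, Nat.lt_succ_of_lt j.isLt⟩, ?_⟩
          rw [hFlt _ j.isLt, hmem]
          exact ⟨ha, by simpa using hj⟩
        · refine ⟨Fin.last k, ?_⟩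
          rw [hFlast _ (by simp)]
          rw [hS] at ha
          simp only [Set.mem_setOf_eq] at ha
          push_neg at ha
          by_cases hau : a = u
          · simp [hau]
          · simp [ha hau]
      · -- overlap and partial union conditions
        intro i hi
        by_cases h : i.val < k
        · set i' : Fin k := ⟨i.val, h⟩ with hi'
          have hIio : (Finset.Iio i).biUnion F = ((Finset.Iio i').biUnion T').image Subtype.val := by
            apply hbUnion
            · intro j hj
              rw [Finset.mem_Iio] at hj
              have hjk : j.val < k := lt_trans hj h
              refine ⟨hjk, ?_⟩
              rw [Finset.mem_Iio]
              exact Fin.mk_lt_mk.2 hj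
            · intro j' hj'
              rw [Finset.mem_Iio] at hj' ⊢
              exact Fin.mk_lt_mk.2 hj'
          have hIic : (Finset.Iic i).biUnion F = ((Finset.Iic i').biUnion T').image Subtype.val := by
            apply hbUnion
            · intro j hj
              rw [Finset.mem_Iic] at hj
              have hjk : j.val < k := lt_of_le_of_lt hj h
              refine ⟨hjk, ?_⟩
              rw [Finset.mem_Iic]
              exact Fin.mk_le_mk.2 hj
            · intro j' hj'
              rw [Finset.mem_Iic] at hj' ⊢
              exact Fin.mk_le_mk.2 hj'
          constructor
          · rw [hFlt i h, hIio, ← Finset.image_inter _ _ Subtype.val_injective,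
              Finset.card_image_of_injective _ Subtype.val_injective]
            exact (h4 i' hi).1
          · have he : (((Finset.Iic i).biUnion F : Finset W) : Set W)
                = Subtype.val '' (((Finset.Iic i').biUnion T' : Finset ↥S) : Set ↥S) := by
              rw [hIic]; exact Finset.coe_image
            rw [he]
            exact aux_induce_induce H _ ((h4 i' hi).2)
        · have hik : i.val = k := by have := i.isLt; omega
          constructor
          · have he : F i ∩ (Finset.Iio i).biUnion F = {x} := by
              ext a
              rw [Finset.mem_inter, Finset.mem_singleton, hFlast i h]
              simp only [Finset.mem_biUnion, Finset.mem_Iio]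
              constructor
              · rintro ⟨haF, j, hji, haj⟩
                have hjk : j.val < k := by
                  have := hji
                  rw [Fin.lt_def] at this
                  omega
                rw [hFlt j hjk, hmem] at haj
                obtain ⟨ha, -⟩ := haj
                simp only [Finset.mem_insert, Finset.mem_singleton] at haF
                rcases haF with rfl | rfl | rfl
                · rfl
                · exact absurd ha huS
                · exact absurd ha hwS
              · rintro rfl
                refine ⟨by simp, ?_⟩
                obtain ⟨j, hj⟩ := hcover _ hxS
                refine ⟨⟨j.val, Nat.lt_succ_of_lt j.isLt⟩, ?_, ?_⟩
                · rw [Fin.lt_def]; simp only [hik]; exact j.isLt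
                · rw [hFlt _ j.isLt, hmem]
                  exact ⟨hxS, by simpa using hj⟩
            rw [he, Finset.card_singleton]
          · have he : (Finset.Iic i).biUnion F = Finset.univ := by
              apply Finset.eq_univ_of_forall
              intro a
              rw [Finset.mem_biUnion]
              by_cases ha : a ∈ S
              · obtain ⟨j, hj⟩ := hcover a ha
                refine ⟨⟨j.val, Nat.lt_succ_of_lt j.isLt⟩, ?_, ?_⟩
                · rw [Finset.mem_Iic, Fin.le_def]
                  have := j.isLt; simp; omega
                · rw [hFlt _ j.isLt, hmem]
                  exact ⟨ha, by simpa using hj⟩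
              · refine ⟨i, Finset.mem_Iic.2 le_rfl, ?_⟩
                rw [hFlast i h]
                rw [hS] at ha
                simp only [Set.mem_setOf_eq] at ha
                push_neg at ha
                by_cases hau : a = u
                · simp [hau]
                · simp [ha hau]
            rw [he]
            have he2 : ((Finset.univ : Finset W) : Set W) = Set.univ := by simp
            rw [he2]
            exact aux_univ_connected H hH


/-- Completeness of the multi-way join for odd pattern sizes.
Every connected graph on `2k + 1` vertices (`k ≥ 1`) is covered by connected
size-3 vertex subsets `T 0, …, T (k-1)` such that each `T i` (for `i ≥ 1`)
meets the union of the previous ones in exactly one vertex and each partial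
union induces a connected subgraph. -/
theorem multiway_join_complete_odd
    {V : Type} [Fintype V] [DecidableEq V] (G : SimpleGraph V)
    (hG : G.Connected) (k : ℕ) (hk : 1 ≤ k)
    (hcard : Fintype.card V = 2 * k + 1) :
    ∃ T : Fin k → Finset V,
      (∀ i, (T i).card = 3) ∧
      (∀ i, (G.induce ((T i : Finset V) : Set V)).Connected) ∧
      Finset.univ.biUnion T = Finset.univ ∧
      (∀ i : Fin k, 0 < i.val →
        (T i ∩ (Finset.Iio i).biUnion T).card = 1 ∧
        (G.induce (((Finset.Iic i).biUnion T : Finset V) : Set V)).Connected) := by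
  exact aux_main k hk V G hG hcard
end

section
/- Let P, P', and G be finite simple graphs, with the vertex set of P' nonempty, and suppose there exists an injective graph homomorphism from P' to P. Then σ_MNI(P', G) ≥ σ_MNI(P, G); that is, the minimum-image-based support is anti-monotone under taking subpatterns. -/
/-- The minimum image based (MNI) support of a pattern `Q` in a graph `G`:
the minimum, over vertices `v` of `Q`, of the number of distinct images of `v`
under injective graph homomorphisms (embeddings) from `Q` to `G`. -/
noncomputable def mniSupport {α β : Type} [Fintype α] [Fintype β]
    (Q : SimpleGraph α) (G : SimpleGraph β) : ℕ :=
  ⨅ v : α, Set.ncard {w : β | ∃ f : Q →g G, Function.Injective f ∧ f v = w}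

/-- The MNI support is anti-monotone: if the pattern `P'` (with
nonempty vertex set) embeds into the pattern `P` via an injective graph
homomorphism, then the MNI support of `P'` in `G` is at least that of `P`. -/
theorem mniSupport_anti_monotone
    {α β γ : Type} [Fintype α] [Fintype β] [Fintype γ] [Nonempty α]
    (P' : SimpleGraph α) (P : SimpleGraph β) (G : SimpleGraph γ)
    (hsub : ∃ g : P' →g P, Function.Injective g) :
    mniSupport P G ≤ mniSupport P' G := by
  obtain ⟨g, hg⟩ := hsub
  unfold mniSupport
  refine le_ciInf fun v => ?_
  refine ciInf_le_of_le (OrderBot.bddBelow _) (g v) ?_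
  refine Set.ncard_le_ncard ?_ (Set.toFinite _)
  rintro w ⟨f, hf, rfl⟩
  exact ⟨f.comp g, hf.comp hg, rfl⟩
end
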